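/- Let F : ℝ^d → ℝ^d be L-Lipschitz and monotone with F z_* = 0 for some z_* ∈ ℝ^d, let z₀ ∈ ℝ^d be deterministic, and let (ξ_{k/2})_{k≥0} be mutually independent ℝ^d-valued random variables with E[ξ_{k/2}] = 0 and E[‖ξ_{k/2}‖²] = σ_{k/2}² < ∞. Define the S-FEG iterates z_{k+1/2} = z_k + (1/(k+1))(z₀ − z_k) − (1 − 1/(k+1))(1/L)(F z_k + ξ_k) and z_{k+1} = z_k + (1/(k+1))(z₀ − z_k) − (1/L)(F z_{k+1/2} + ξ_{k+1/2}) for k ≥ 0. Then for all k ≥ 1, E[‖F z_k‖²] ≤ 4L²‖z₀ − z_*‖²/k² + (6/k²)·(σ₀² + Σ_{l=1}^{k−1} (l² σ_l² + (l+1)² σ_{l+1/2}²)). -/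

import Mathlib

/-!
Along exact anchored extragradient steps the potential
`V_k = k²/2 ‖F z_k‖² + k L ⟪F z_k, z_k - z₀⟫` does not increase: the increment is minus a
monotonicity term minus a Lipschitz slack. With noisy oracles the increment picks up terms linear
in the two noises of the step and their squares. Replacing the iterates that depend on a noise by
the noiseless points they perturb costs another `‖noise‖²` each (Lipschitz continuity), after which
every linear term pairs a noise with a vector determined by earlier noises and has mean zero by
independence. Hence `E V_k ≤ 3/2 (σ₀² + ∑ …)`, while monotonicity at `z_*` gives
`V_k ≥ k²/4 ‖F z_k‖² - L² ‖z₀ - z_*‖²`.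
-/

open MeasureTheory ProbabilityTheory
open scoped RealInnerProductSpace

section Deterministic

variable {E : Type*} [NormedAddCommGroup E] [InnerProductSpace ℝ E]

theorem neg_inner_le_of_norm_sub_le {p p' q : E} {t : ℝ} (h : ‖p - p'‖ ≤ t * ‖q‖) :
    -⟪p, q⟫ ≤ t * ‖q‖ ^ 2 - ⟪p', q⟫ := by
  have hcs : -⟪p - p', q⟫ ≤ ‖p - p'‖ * ‖q‖ :=
    (neg_le_abs _).trans (abs_real_inner_le_norm _ _)
  have := mul_le_mul_of_nonneg_right h (norm_nonneg q)
  rw [inner_sub_left] at hcs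
  nlinarith

variable (F : E → E) (L : ℝ) (z0 : E)

noncomputable def fegPotential (K : ℝ) (z : E) : ℝ :=
  K ^ 2 / 2 * ‖F z‖ ^ 2 + K * L * ⟪F z, z - z0⟫

noncomputable def fegExtrapolation (K : ℝ) (z ξ : E) : E :=
  z + (K + 1)⁻¹ • (z0 - z) - ((1 - (K + 1)⁻¹) * (1 / L)) • (F z + ξ)

noncomputable def fegUpdate (K : ℝ) (z w η : E) : E :=
  z + (K + 1)⁻¹ • (z0 - z) - (1 / L) • (F w + η)

variable {F L z0}

theorem fegPotential_update_le (hLip : ∀ x y, ‖F x - F y‖ ≤ L * ‖x - y‖)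
    (hMono : ∀ x y, 0 ≤ ⟪F x - F y, x - y⟫) (hL : 0 < L) {K : ℝ} (hK : 0 ≤ K)
    {z w z' ξ η : E} (hw : w = fegExtrapolation F L z0 K z ξ)
    (hz' : z' = fegUpdate F L z0 K z w η) :
    fegPotential F L z0 (K + 1) z' ≤ fegPotential F L z0 K z
      + K ^ 2 * ⟪F z, ξ⟫ - K * (K + 1) * ⟪F w, ξ⟫ + (K + 1) ^ 2 * ⟪F w - F z', η⟫
      + K ^ 2 / 2 * ‖ξ‖ ^ 2 + (K + 1) ^ 2 / 2 * ‖η‖ ^ 2 - K * (K + 1) * ⟪ξ, η⟫ := by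
  have hmono : 0 ≤ K * (K + 1) * L * ⟪F z' - F z, z' - z⟫ := by
    have := hMono z' z
    positivity
  have hlip : 0 ≤ (K + 1) ^ 2 / 2 * (L ^ 2 * ‖z' - w‖ ^ 2 - ‖F z' - F w‖ ^ 2) := by
    have : ‖F z' - F w‖ ^ 2 ≤ (L * ‖z' - w‖) ^ 2 := by gcongr; exact hLip z' w
    nlinarith
  -- the monotonicity and Lipschitz slacks add up exactly to the claimed gap
  have key : fegPotential F L z0 (K + 1) z' - (fegPotential F L z0 K z
      + K ^ 2 * ⟪F z, ξ⟫ - K * (K + 1) * ⟪F w, ξ⟫ + (K + 1) ^ 2 * ⟪F w - F z', η⟫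
      + K ^ 2 / 2 * ‖ξ‖ ^ 2 + (K + 1) ^ 2 / 2 * ‖η‖ ^ 2 - K * (K + 1) * ⟪ξ, η⟫)
      + K * (K + 1) * L * ⟪F z' - F z, z' - z⟫
      + (K + 1) ^ 2 / 2 * (L ^ 2 * ‖z' - w‖ ^ 2 - ‖F z' - F w‖ ^ 2) = 0 := by
    have hK1 : K + 1 ≠ 0 := by positivity
    unfold fegPotential
    unfold fegExtrapolation at hw
    unfold fegUpdate at hz'
    generalize F z' = c, F w = b, F z = a at *
    subst hz' hw
    simp only [← real_inner_self_eq_norm_sq, inner_sub_left, inner_sub_right,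
      inner_add_left, inner_add_right, real_inner_smul_left, real_inner_smul_right]
    simp only [real_inner_comm]
    field_simp
    ring
  linarith

theorem norm_sub_le_of_sub_eq_neg_smul (hLip : ∀ x y, ‖F x - F y‖ ≤ L * ‖x - y‖) (hL : 0 < L)
    {x y v : E} {c : ℝ} (hc : 0 ≤ c) (h : x - y = -((c * (1 / L)) • v)) :
    ‖F x - F y‖ ≤ c * ‖v‖ :=
  calc ‖F x - F y‖ ≤ L * ‖x - y‖ := hLip x y
    _ = c * ‖v‖ := by
      rw [h, norm_neg, norm_smul, Real.norm_of_nonneg (by positivity)]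
      field_simp

theorem fegPotential_update_le_predictable (hLip : ∀ x y, ‖F x - F y‖ ≤ L * ‖x - y‖)
    (hMono : ∀ x y, 0 ≤ ⟪F x - F y, x - y⟫) (hL : 0 < L) {K : ℝ} (hK : 0 ≤ K)
    {z w z' ξ η : E} (hw : w = fegExtrapolation F L z0 K z ξ)
    (hz' : z' = fegUpdate F L z0 K z w η) :
    fegPotential F L z0 (K + 1) z' ≤ fegPotential F L z0 K z
      + ⟪K ^ 2 • F z - (K * (K + 1)) • F (fegExtrapolation F L z0 K z 0), ξ⟫
      + ⟪(K + 1) ^ 2 • (F w - F (fegUpdate F L z0 K z w 0)) - (K * (K + 1)) • ξ, η⟫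
      + 3 / 2 * K ^ 2 * ‖ξ‖ ^ 2 + 3 / 2 * (K + 1) ^ 2 * ‖η‖ ^ 2 := by
  have hK1 : 0 < K + 1 := by linarith
  have hβ : 0 ≤ 1 - (K + 1)⁻¹ := sub_nonneg.2 (inv_le_one_of_one_le₀ (by linarith))
  have hstep := fegPotential_update_le hLip hMono hL hK hw hz'
  have hw' : ‖F w - F (fegExtrapolation F L z0 K z 0)‖ ≤ (1 - (K + 1)⁻¹) * ‖ξ‖ :=
    norm_sub_le_of_sub_eq_neg_smul hLip hL hβ (by
      rw [hw]; simp only [fegExtrapolation, add_zero, smul_add]; abel)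
  have hz'' : ‖F z' - F (fegUpdate F L z0 K z w 0)‖ ≤ 1 * ‖η‖ :=
    norm_sub_le_of_sub_eq_neg_smul hLip hL zero_le_one (by
      rw [hz']; simp only [fegUpdate, add_zero, smul_add, one_mul]; abel)
  have hξ := mul_le_mul_of_nonneg_left (neg_inner_le_of_norm_sub_le hw')
    (by positivity : 0 ≤ K * (K + 1))
  have hη := mul_le_mul_of_nonneg_left (neg_inner_le_of_norm_sub_le hz'')
    (by positivity : 0 ≤ (K + 1) ^ 2)
  have hcoef : K * (K + 1) * (1 - (K + 1)⁻¹) = K ^ 2 := by field_simp; ring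
  rw [mul_sub, ← mul_assoc, hcoef] at hξ
  simp only [inner_sub_left, real_inner_smul_left] at hstep ⊢
  linarith

theorem sq_norm_div_four_sub_le_fegPotential (hMono : ∀ x y, 0 ≤ ⟪F x - F y, x - y⟫)
    {zstar : E} (hzstar : F zstar = 0) (hL : 0 ≤ L) {K : ℝ} (hK : 0 ≤ K) (z : E) :
    K ^ 2 / 4 * ‖F z‖ ^ 2 - L ^ 2 * ‖z0 - zstar‖ ^ 2 ≤ fegPotential F L z0 K z := by
  have hsplit : ⟪F z, z - z0⟫ = ⟪F z - F zstar, z - zstar⟫ + ⟪F z, zstar - z0⟫ := by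
    rw [hzstar, sub_zero, ← inner_add_right, sub_add_sub_cancel]
  have hcs : -(‖F z‖ * ‖z0 - zstar‖) ≤ ⟪F z, zstar - z0⟫ := by
    rw [← norm_neg (z0 - zstar), neg_sub]
    exact (neg_le_neg (abs_real_inner_le_norm _ _)).trans (neg_abs_le _)
  have hinner : -(‖F z‖ * ‖z0 - zstar‖) ≤ ⟪F z, z - z0⟫ := by
    rw [hsplit]
    linarith [hMono z zstar]
  have := mul_le_mul_of_nonneg_left hinner (mul_nonneg hK hL)
  unfold fegPotential
  nlinarith [sq_nonneg (K * ‖F z‖ / 2 - L * ‖z0 - zstar‖)]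

end Deterministic

section Probability

variable {Ω : Type*} [MeasurableSpace Ω] {μ : Measure Ω}

theorem MeasureTheory.MemLp.integrable_inner {E : Type*} [NormedAddCommGroup E]
    [InnerProductSpace ℝ E] {X Y : Ω → E} (hX : MemLp X 2 μ) (hY : MemLp Y 2 μ) :
    Integrable (fun ω => ⟪X ω, Y ω⟫) μ :=
  (L2.integrable_inner (𝕜 := ℝ) (hX.toLp X) (hY.toLp Y)).congr <| by
    filter_upwards [hX.coeFn_toLp, hY.coeFn_toLp] with ω hXω hYω
    rw [hXω, hYω]

theorem ProbabilityTheory.IndepFun.integral_inner {E : Type*} [NormedAddCommGroup E]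
    [InnerProductSpace ℝ E] [CompleteSpace E] [MeasurableSpace E] [BorelSpace E]
    {X Y : Ω → E} (hXY : IndepFun X Y μ) (hX : Integrable X μ) (hY : Integrable Y μ) :
    ∫ ω, ⟪X ω, Y ω⟫ ∂μ = ⟪∫ ω, X ω ∂μ, ∫ ω, Y ω ∂μ⟫ :=
  hXY.integral_bilin hX hY (innerSL ℝ)

theorem LipschitzWith.memLp_comp [IsFiniteMeasure μ] {E G : Type*} [NormedAddCommGroup E]
    [NormedAddCommGroup G] {F : E → G} {K : NNReal} (hF : LipschitzWith K F) {X : Ω → E}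
    {p : ENNReal} (hX : MemLp X p μ) : MemLp (fun ω => F (X ω)) p μ := by
  convert ((hF.sub (LipschitzWith.const (F 0))).comp_memLp (sub_self _) hX).add
    (memLp_const (F 0)) using 1
  ext ω
  simp

theorem integrable_fegPotential [IsFiniteMeasure μ] {E : Type*} [NormedAddCommGroup E]
    [InnerProductSpace ℝ E] {F : E → E} {K : NNReal} (hF : LipschitzWith K F) (L : ℝ) (z0 : E)
    (t : ℝ) {Z : Ω → E} (hZ : MemLp Z 2 μ) :
    Integrable (fun ω => fegPotential F L z0 t (Z ω)) μ := by
  have hFZ := hF.memLp_comp hZ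
  exact (((memLp_two_iff_integrable_sq_norm hFZ.1).1 hFZ).const_mul _).add
    ((hFZ.integrable_inner (hZ.sub (memLp_const z0))).const_mul _)

theorem mul_integral_sq_norm_sub_le_integral_fegPotential [IsProbabilityMeasure μ] {E : Type*}
    [NormedAddCommGroup E] [InnerProductSpace ℝ E] {F : E → E} {K : NNReal}
    (hF : LipschitzWith K F) (hMono : ∀ x y, 0 ≤ ⟪F x - F y, x - y⟫) {zstar : E}
    (hzstar : F zstar = 0) {L : ℝ} (hL : 0 ≤ L) {z0 : E} {t : ℝ} (ht : 0 ≤ t) {Z : Ω → E}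
    (hZ : MemLp Z 2 μ) :
    t ^ 2 / 4 * ∫ ω, ‖F (Z ω)‖ ^ 2 ∂μ - L ^ 2 * ‖z0 - zstar‖ ^ 2
      ≤ ∫ ω, fegPotential F L z0 t (Z ω) ∂μ := by
  have hFZ := hF.memLp_comp hZ
  have hsq := ((memLp_two_iff_integrable_sq_norm hFZ.1).1 hFZ).const_mul (t ^ 2 / 4)
  calc _ = ∫ ω, (t ^ 2 / 4 * ‖F (Z ω)‖ ^ 2 - L ^ 2 * ‖z0 - zstar‖ ^ 2) ∂μ := by
        rw [integral_sub hsq (integrable_const _), integral_const_mul, integral_const,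
          probReal_univ, one_smul]
    _ ≤ _ := integral_mono (hsq.sub (integrable_const _)) (integrable_fegPotential hF L z0 t hZ)
        fun ω => sq_norm_div_four_sub_le_fegPotential hMono hzstar hL ht (Z ω)

variable {β : Type*} [MeasurableSpace β]

abbrev pastSigma (ξ : ℕ → Ω → β) (n : ℕ) : MeasurableSpace Ω :=
  ⨆ i ∈ Set.Iio n, MeasurableSpace.comap (ξ i) inferInstance

theorem ProbabilityTheory.iIndepFun.indepFun_of_measurable_pastSigma {γ : Type*}
    [MeasurableSpace γ] {ξ : ℕ → Ω → β} (hmeas : ∀ n, Measurable (ξ n)) (hindep : iIndepFun ξ μ)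
    {n m : ℕ} (hnm : n ≤ m) {X : Ω → γ} (hX : Measurable[pastSigma ξ n] X) :
    IndepFun X (ξ m) μ := by
  have hdisj : Disjoint (Set.Iio n) {m} :=
    Set.disjoint_singleton_right.2 fun h => (Set.mem_Iio.1 h).not_ge hnm
  have hpast := indep_iSup_of_disjoint (fun i => (hmeas i).comap_le) hindep.iIndep hdisj
  rw [iSup_singleton] at hpast
  rw [IndepFun_iff_Indep]
  exact indep_of_indep_of_le_left hpast hX.comap_le

variable {E : Type*} [NormedAddCommGroup E] [MeasurableSpace E]

def MemL2Past (ξ : ℕ → Ω → β) (μ : Measure Ω) (n : ℕ) (X : Ω → E) : Prop :=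
  Measurable[pastSigma ξ n] X ∧ MemLp X 2 μ

namespace MemL2Past

variable {ξ : ℕ → Ω → β} {n : ℕ} {X Y : Ω → E}

theorem const [IsFiniteMeasure μ] (c : E) : MemL2Past ξ μ n fun _ => c :=
  ⟨measurable_const, memLp_const c⟩

theorem noise {ζ : ℕ → Ω → E} {i : ℕ} (hi : i < n) (hζ : MemLp (ζ i) 2 μ) :
    MemL2Past ζ μ n (ζ i) :=
  ⟨Measurable.of_comap_le (le_biSup (fun i => MeasurableSpace.comap (ζ i) inferInstance)
    (Set.mem_Iio.2 hi)), hζ⟩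

theorem mono {n' : ℕ} (hX : MemL2Past ξ μ n X) (hn : n ≤ n') : MemL2Past ξ μ n' X :=
  ⟨hX.1.mono (biSup_mono fun _ hi => lt_of_lt_of_le hi hn) le_rfl, hX.2⟩

theorem add [BorelSpace E] [SecondCountableTopology E] (hX : MemL2Past ξ μ n X)
    (hY : MemL2Past ξ μ n Y) : MemL2Past ξ μ n fun ω => X ω + Y ω :=
  ⟨hX.1.add hY.1, hX.2.add hY.2⟩

theorem sub [BorelSpace E] [SecondCountableTopology E] (hX : MemL2Past ξ μ n X)
    (hY : MemL2Past ξ μ n Y) : MemL2Past ξ μ n fun ω => X ω - Y ω :=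
  ⟨hX.1.sub hY.1, hX.2.sub hY.2⟩

theorem const_smul [NormedSpace ℝ E] [BorelSpace E] (hX : MemL2Past ξ μ n X) (c : ℝ) :
    MemL2Past ξ μ n fun ω => c • X ω :=
  ⟨hX.1.const_smul c, hX.2.const_smul c⟩

theorem comp_lipschitzWith [OpensMeasurableSpace E] [IsFiniteMeasure μ] {G : Type*}
    [NormedAddCommGroup G] [MeasurableSpace G] [BorelSpace G] {F : E → G} {K : NNReal}
    (hF : LipschitzWith K F) (hX : MemL2Past ξ μ n X) : MemL2Past ξ μ n fun ω => F (X ω) :=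
  ⟨hF.continuous.measurable.comp hX.1, hF.memLp_comp hX.2⟩

theorem integral_inner_noise_eq_zero [InnerProductSpace ℝ E] [CompleteSpace E] [BorelSpace E]
    [IsFiniteMeasure μ] {ζ : ℕ → Ω → E} (hmeas : ∀ n, Measurable (ζ n)) (hindep : iIndepFun ζ μ)
    (hX : MemL2Past ζ μ n X) {m : ℕ} (hnm : n ≤ m) (hζ : Integrable (ζ m) μ)
    (hmean : ∫ ω, ζ m ω ∂μ = 0) : ∫ ω, ⟪X ω, ζ m ω⟫ ∂μ = 0 := by
  rw [(hindep.indepFun_of_measurable_pastSigma hmeas hnm hX.1).integral_inner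
    (hX.2.integrable one_le_two) hζ, hmean, inner_zero_right]

end MemL2Past

theorem integral_le_add_of_le_add_inner_noise [InnerProductSpace ℝ E] [CompleteSpace E]
    [BorelSpace E] [IsFiniteMeasure μ] {ζ : ℕ → Ω → E} (hmeas : ∀ n, Measurable (ζ n))
    (hindep : iIndepFun ζ μ) (hmean : ∀ n, ∫ ω, ζ n ω ∂μ = 0) (hζ : ∀ n, MemLp (ζ n) 2 μ)
    {V V' : Ω → ℝ} (hV : Integrable V μ) (hV' : Integrable V' μ) {X Y : Ω → E} {i j : ℕ}
    (hX : MemL2Past ζ μ i X) (hY : MemL2Past ζ μ j Y) (a b : ℝ)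
    (h : ∀ ω, V' ω ≤ V ω + ⟪X ω, ζ i ω⟫ + ⟪Y ω, ζ j ω⟫ + a * ‖ζ i ω‖ ^ 2 + b * ‖ζ j ω‖ ^ 2) :
    ∫ ω, V' ω ∂μ ≤ ∫ ω, V ω ∂μ + a * ∫ ω, ‖ζ i ω‖ ^ 2 ∂μ + b * ∫ ω, ‖ζ j ω‖ ^ 2 ∂μ := by
  have iX := hX.2.integrable_inner (hζ i)
  have iY := hY.2.integrable_inner (hζ j)
  have iA := ((hζ i).integrable_norm_pow' (p := 2)).const_mul a
  have iB := ((hζ j).integrable_norm_pow' (p := 2)).const_mul b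
  have hXζ := hX.integral_inner_noise_eq_zero hmeas hindep le_rfl
    ((hζ i).integrable one_le_two) (hmean i)
  have hYζ := hY.integral_inner_noise_eq_zero hmeas hindep le_rfl
    ((hζ j).integrable one_le_two) (hmean j)
  refine (integral_mono hV' ?_ h).trans_eq ?_
  · exact (((hV.add iX).add iY).add iA).add iB
  rw [integral_add (by fun_prop) iB, integral_add (by fun_prop) iA, integral_add (by fun_prop) iY,
    integral_add hV iX, hXζ, hYζ, integral_const_mul, integral_const_mul, add_zero, add_zero]

end Probability

section Iterates

variable {Ω : Type*} [MeasurableSpace Ω] {μ : Measure Ω}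
  {E : Type*} [NormedAddCommGroup E] [InnerProductSpace ℝ E] [MeasurableSpace E] [BorelSpace E]
  [SecondCountableTopology E]

namespace MemL2Past

variable {ξ : ℕ → Ω → E} {n : ℕ} [IsFiniteMeasure μ] {F : E → E} {K : NNReal}
  (hF : LipschitzWith K F) (L : ℝ) (z0 : E) (t : ℝ) {Z W H : Ω → E}
include hF

theorem fegExtrapolation (hZ : MemL2Past ξ μ n Z) (hH : MemL2Past ξ μ n H) :
    MemL2Past ξ μ n fun ω => fegExtrapolation F L z0 t (Z ω) (H ω) :=
  (hZ.add (((const z0).sub hZ).const_smul _)).sub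
    (((hZ.comp_lipschitzWith hF).add hH).const_smul _)

theorem fegUpdate (hZ : MemL2Past ξ μ n Z) (hW : MemL2Past ξ μ n W) (hH : MemL2Past ξ μ n H) :
    MemL2Past ξ μ n fun ω => fegUpdate F L z0 t (Z ω) (W ω) (H ω) :=
  (hZ.add (((const z0).sub hZ).const_smul _)).sub
    (((hW.comp_lipschitzWith hF).add hH).const_smul _)

end MemL2Past

-- `ξ (2 * k)` is the oracle noise at `z_k` and `ξ (2 * k + 1)` the one at `z_{k+1/2}`; since
-- the anchoring weight is `1` at `k = 0`, the first half step returns `z₀` itself.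
structure IsSFEG (F : E → E) (L : ℝ) (z0 : E) (ξ z w : ℕ → Ω → E) : Prop where
  init : ∀ ω, z 0 ω = z0
  extrapolation : ∀ k ω, w k ω = fegExtrapolation F L z0 k (z k ω) (ξ (2 * k) ω)
  first : ∀ ω, z 1 ω = z0 - (1 / L) • (F z0 + ξ 0 ω)
  update : ∀ k, 1 ≤ k → ∀ ω, z (k + 1) ω = fegUpdate F L z0 k (z k ω) (w k ω) (ξ (2 * k + 1) ω)

namespace IsSFEG

section Adapted

variable [IsFiniteMeasure μ] {F : E → E} {L : ℝ} {z0 : E} {ξ z w : ℕ → Ω → E}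
  (h : IsSFEG F L z0 ξ z w) {K : NNReal} (hF : LipschitzWith K F) (hξ : ∀ n, MemLp (ξ n) 2 μ)
include h hF hξ

theorem memL2Past_extrapolation {k : ℕ} (hz : MemL2Past ξ μ (2 * k) (z k)) :
    MemL2Past ξ μ (2 * k + 1) (w k) := by
  rw [funext (h.extrapolation k)]
  exact (hz.mono (Nat.le_succ _)).fegExtrapolation hF L z0 k (.noise (by omega) (hξ _))

theorem memL2Past_iterate : ∀ k, MemL2Past ξ μ (2 * k) (z k)
  | 0 => by
    rw [funext h.init]
    exact .const z0
  | 1 => by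
    rw [funext h.first]
    exact (MemL2Past.const z0).sub
      (((MemL2Past.const _).add (MemL2Past.noise (by omega) (hξ 0))).const_smul _)
  | k + 2 => by
    have hz := (memL2Past_iterate (k + 1)).mono (by omega : 2 * (k + 1) ≤ 2 * (k + 2))
    have hw := (h.memL2Past_extrapolation hF hξ (memL2Past_iterate (k + 1))).mono
      (by omega : 2 * (k + 1) + 1 ≤ 2 * (k + 2))
    rw [funext (h.update (k + 1) (by omega))]
    exact hz.fegUpdate hF L z0 _ hw (.noise (by omega) (hξ _))

end Adapted

section Expectation

variable [CompleteSpace E] [IsFiniteMeasure μ] {F : E → E} {L : ℝ} {z0 : E} {ξ z w : ℕ → Ω → E}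
  (h : IsSFEG F L z0 ξ z w) (hLip : ∀ x y, ‖F x - F y‖ ≤ L * ‖x - y‖)
  (hMono : ∀ x y, 0 ≤ ⟪F x - F y, x - y⟫) (hL : 0 < L) (hmeas : ∀ n, Measurable (ξ n))
  (hindep : iIndepFun ξ μ) (hmean : ∀ n, ∫ ω, ξ n ω ∂μ = 0) (hξ : ∀ n, MemLp (ξ n) 2 μ)
include h hLip hMono hL hmeas hindep hmean hξ

theorem integral_fegPotential_one_le :
    ∫ ω, fegPotential F L z0 1 (z 1 ω) ∂μ ≤ 3 / 2 * ∫ ω, ‖ξ 0 ω‖ ^ 2 ∂μ := by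
  have hF : LipschitzWith ⟨L, hL.le⟩ F := lipschitzWith_iff_norm_sub_le.2 hLip
  set c := F z0 - F (fegUpdate F L z0 0 z0 z0 0)
  have hpath : ∀ ω, fegPotential F L z0 1 (z 1 ω) ≤ 0 + ⟪(0 : E), ξ 0 ω⟫ + ⟪c, ξ 0 ω⟫
      + 0 * ‖ξ 0 ω‖ ^ 2 + 3 / 2 * ‖ξ 0 ω‖ ^ 2 := fun ω => by
    have := fegPotential_update_le_predictable hLip hMono hL le_rfl (z0 := z0) (z := z0)
      (w := z0) (z' := z 1 ω) (ξ := 0) (η := ξ 0 ω) (by simp [fegExtrapolation])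
      (by rw [h.first ω]; simp [fegUpdate])
    simpa [fegPotential] using this
  simpa using integral_le_add_of_le_add_inner_noise hmeas hindep hmean hξ (integrable_const 0)
    (integrable_fegPotential hF L z0 1 (h.memL2Past_iterate hF hξ 1).2) (.const 0) (.const c)
    0 (3 / 2) hpath

theorem integral_fegPotential_succ_le {k : ℕ} (hk : 1 ≤ k) :
    ∫ ω, fegPotential F L z0 (k + 1 : ℕ) (z (k + 1) ω) ∂μ ≤ ∫ ω, fegPotential F L z0 k (z k ω) ∂μ
      + 3 / 2 * (k : ℝ) ^ 2 * ∫ ω, ‖ξ (2 * k) ω‖ ^ 2 ∂μ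
      + 3 / 2 * ((k : ℝ) + 1) ^ 2 * ∫ ω, ‖ξ (2 * k + 1) ω‖ ^ 2 ∂μ := by
  have hF : LipschitzWith ⟨L, hL.le⟩ F := lipschitzWith_iff_norm_sub_le.2 hLip
  have hz := h.memL2Past_iterate hF hξ k
  have hw := h.memL2Past_extrapolation hF hξ hz
  set X : Ω → E := fun ω => (k : ℝ) ^ 2 • F (z k ω)
    - ((k : ℝ) * (k + 1)) • F (fegExtrapolation F L z0 k (z k ω) 0)
  set Y : Ω → E := fun ω => ((k : ℝ) + 1) ^ 2 • (F (w k ω)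
    - F (fegUpdate F L z0 k (z k ω) (w k ω) 0)) - ((k : ℝ) * (k + 1)) • ξ (2 * k) ω
  have hX : MemL2Past ξ μ (2 * k) X :=
    ((hz.comp_lipschitzWith hF).const_smul _).sub
      (((hz.fegExtrapolation hF L z0 k (.const 0)).comp_lipschitzWith hF).const_smul _)
  have hz' := hz.mono (Nat.le_succ _)
  have hY : MemL2Past ξ μ (2 * k + 1) Y :=
    (((hw.comp_lipschitzWith hF).sub
      ((hz'.fegUpdate hF L z0 k hw (.const 0)).comp_lipschitzWith hF)).const_smul _).sub
      ((MemL2Past.noise (by omega) (hξ _)).const_smul _)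
  have hpath : ∀ ω, fegPotential F L z0 (k + 1 : ℕ) (z (k + 1) ω) ≤
      fegPotential F L z0 k (z k ω) + ⟪X ω, ξ (2 * k) ω⟫ + ⟪Y ω, ξ (2 * k + 1) ω⟫
        + 3 / 2 * (k : ℝ) ^ 2 * ‖ξ (2 * k) ω‖ ^ 2
        + 3 / 2 * ((k : ℝ) + 1) ^ 2 * ‖ξ (2 * k + 1) ω‖ ^ 2 := fun ω => by
    push_cast
    exact fegPotential_update_le_predictable hLip hMono hL k.cast_nonneg
      (h.extrapolation k ω) (h.update k hk ω)
  exact integral_le_add_of_le_add_inner_noise hmeas hindep hmean hξ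
    (integrable_fegPotential hF L z0 k hz.2)
    (integrable_fegPotential hF L z0 _ (h.memL2Past_iterate hF hξ _).2) hX hY _ _ hpath

theorem integral_fegPotential_le {k : ℕ} (hk : 1 ≤ k) :
    ∫ ω, fegPotential F L z0 k (z k ω) ∂μ ≤ 3 / 2 * (∫ ω, ‖ξ 0 ω‖ ^ 2 ∂μ
      + ∑ l ∈ Finset.Icc 1 (k - 1), ((l : ℝ) ^ 2 * ∫ ω, ‖ξ (2 * l) ω‖ ^ 2 ∂μ
        + ((l : ℝ) + 1) ^ 2 * ∫ ω, ‖ξ (2 * l + 1) ω‖ ^ 2 ∂μ)) := by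
  induction k, hk using Nat.le_induction with
  | base => simpa using h.integral_fegPotential_one_le hLip hMono hL hmeas hindep hmean hξ
  | succ n hn ih =>
    obtain ⟨m, rfl⟩ : ∃ m, n = m + 1 := ⟨n - 1, by omega⟩
    have hstep := h.integral_fegPotential_succ_le hLip hMono hL hmeas hindep hmean hξ hn
    rw [Nat.add_sub_cancel, Finset.sum_Icc_succ_top (by omega)]
    rw [Nat.add_sub_cancel] at ih
    linarith

end Expectation

end IsSFEG

end Iterates

/-- **S-FEG convergence** (Theorem 3 of the paper, first bound).
The noise family is indexed by half-integers: `ξ (2*k)` is the paper's `ξ_k`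
and `ξ (2*k+1)` is the paper's `ξ_{k+1/2}`; `σsq n` denotes the variance
`σ_{n/2}²`.  Since `β₀ = 1` forces `z_{1/2} = z₀`, the first full step
`z₁ = z₀ - (1/L)(F z₀ + ξ₀)` uses the oracle queried at `z₀`.  Then for all
`k ≥ 1`,
`E‖F z_k‖² ≤ 4L²‖z₀-z_*‖²/k² + (6/k²)(σ₀² + ∑_{l=1}^{k-1} (l²σ_l² + (l+1)²σ_{l+1/2}²))`. -/
theorem sfeg_convergence
    {d : ℕ} {Ω : Type*} [MeasurableSpace Ω] (μ : Measure Ω) [IsProbabilityMeasure μ]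
    (L : ℝ) (hL : 0 < L)
    (F : EuclideanSpace ℝ (Fin d) → EuclideanSpace ℝ (Fin d))
    (hLip : ∀ z z' : EuclideanSpace ℝ (Fin d), ‖F z - F z'‖ ≤ L * ‖z - z'‖)
    (hMono : ∀ z z' : EuclideanSpace ℝ (Fin d), 0 ≤ ⟪F z - F z', z - z'⟫)
    (zstar : EuclideanSpace ℝ (Fin d)) (hzstar : F zstar = 0)
    (z0 : EuclideanSpace ℝ (Fin d))
    (ξ : ℕ → Ω → EuclideanSpace ℝ (Fin d))
    (hmeas : ∀ n, Measurable (ξ n))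
    (hindep : iIndepFun ξ μ)
    (hmean : ∀ n, ∫ ω, ξ n ω ∂μ = 0)
    (σsq : ℕ → ℝ)
    (hint : ∀ n, Integrable (fun ω => ‖ξ n ω‖ ^ 2) μ)
    (hvar : ∀ n, ∫ ω, ‖ξ n ω‖ ^ 2 ∂μ = σsq n)
    (z w : ℕ → Ω → EuclideanSpace ℝ (Fin d))
    (hz0 : ∀ ω, z 0 ω = z0)
    (hw : ∀ (k : ℕ) (ω : Ω), w k ω = z k ω + (((k : ℝ) + 1)⁻¹) • (z0 - z k ω)
      - ((1 - ((k : ℝ) + 1)⁻¹) * (1 / L)) • (F (z k ω) + ξ (2 * k) ω))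
    (hz1 : ∀ ω : Ω, z 1 ω = z0 - (1 / L) • (F z0 + ξ 0 ω))
    (hz : ∀ (k : ℕ), 1 ≤ k → ∀ ω : Ω,
      z (k + 1) ω = z k ω + (((k : ℝ) + 1)⁻¹) • (z0 - z k ω)
        - (1 / L) • (F (w k ω) + ξ (2 * k + 1) ω)) :
    ∀ k : ℕ, 1 ≤ k →
      ∫ ω, ‖F (z k ω)‖ ^ 2 ∂μ
        ≤ 4 * L ^ 2 * ‖z0 - zstar‖ ^ 2 / (k : ℝ) ^ 2
          + (6 / (k : ℝ) ^ 2) * (σsq 0 + ∑ l ∈ Finset.Icc 1 (k - 1),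
              ((l : ℝ) ^ 2 * σsq (2 * l) + ((l : ℝ) + 1) ^ 2 * σsq (2 * l + 1))) := by
  intro k hk
  have hF : LipschitzWith ⟨L, hL.le⟩ F := lipschitzWith_iff_norm_sub_le.2 hLip
  have hξ : ∀ n, MemLp (ξ n) 2 μ := fun n =>
    (memLp_two_iff_integrable_sq_norm (hmeas n).aestronglyMeasurable).2 (hint n)
  have hrun : IsSFEG F L z0 ξ z w := ⟨hz0, hw, hz1, hz⟩
  have hupper := hrun.integral_fegPotential_le hLip hMono hL hmeas hindep hmean hξ hk
  simp only [hvar] at hupper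
  have hlower := mul_integral_sq_norm_sub_le_integral_fegPotential (z0 := z0) hF hMono hzstar
    hL.le k.cast_nonneg (hrun.memL2Past_iterate hF hξ k).2
  have hk2 : (0 : ℝ) < (k : ℝ) ^ 2 := by positivity
  calc ∫ ω, ‖F (z k ω)‖ ^ 2 ∂μ
      ≤ (4 * L ^ 2 * ‖z0 - zstar‖ ^ 2 + 6 * (σsq 0 + ∑ l ∈ Finset.Icc 1 (k - 1),
          ((l : ℝ) ^ 2 * σsq (2 * l) + ((l : ℝ) + 1) ^ 2 * σsq (2 * l + 1)))) / (k : ℝ) ^ 2 := by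
        rw [le_div_iff₀ hk2]
        linarith
    _ = _ := by ring
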